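/- arXiv:1912.02940 — 4 statements merged into one kernel-verified Lean document; each statement's English description precedes it below -/
import Mathlib

section
/- Let s > 2 and let D be the ℓ×ℓ tridiagonal matrix with diagonal entries s and off-diagonal entries −1. Then D is invertible and its inverse is given by (D⁻¹)_{ij} = U_{i−1}(s/2)·U_{ℓ−j}(s/2)/U_ℓ(s/2) for i ≤ j, and (D⁻¹)_{ij} = U_{j−1}(s/2)·U_{ℓ−i}(s/2)/U_ℓ(s/2) for i > j, where U_n is the Chebyshev polynomial of the second kind. -/
open Polynomial Matrix

/-! With `x = s / 2`, the inverse is the discrete Dirichlet Green's function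
`G(a, b) = U_{min a b}(x) · U_{ℓ-1-max a b}(x) / U_ℓ(x)`. For fixed `b`, on either side of the
diagonal `G(·, b)` is a multiple of a solution of `U_{n+1} = 2x U_n - U_{n-1}`, which is what
`D G = 1` asks off the diagonal; since `U_{-1} = 0`, `G` vanishes at the fictitious rows `-1` and
`ℓ`, so the truncation of `D` at the boundary is harmless. On the diagonal the Casoratian identity
`U_{a+1} U_m - U_a U_{m-1} = U_{a+m+1}` produces exactly `U_ℓ`. Finally `x = cosh λ` with
`λ > 0`, and `U_ℓ(cosh λ) sinh λ = sinh ((ℓ+1) λ) > 0`, so the normalisation is legitimate. -/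

namespace Polynomial.Chebyshev

variable (R : Type*) [CommRing R]

theorem U_add_add_one (m n : ℤ) :
    U R (m + n + 1) = U R (m + 1) * U R n - U R m * U R (n - 1) := by
  induction n using Polynomial.Chebyshev.induct with
  | zero => simp [U_zero, U_neg_one]
  | one => rw [U_add_one R (m + 1), U_one, sub_self, U_zero, add_sub_cancel_right]; ring
  | add_two n ih1 ih2 =>
    have h₁ := U_add_two R (m + n + 1)
    have h₂ := U_add_two R n
    have h₃ := U_add_one R n
    linear_combination (norm := ring_nf) h₁ + 2 * X * ih1 - ih2 - U R (m + 1) * h₂ + U R m * h₃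
  | neg_add_one n ih1 ih2 =>
    have h₁ := U_sub_one R (m - n + 1)
    have h₂ := U_sub_one R (-n)
    have h₃ := U_sub_one R (-n - 1)
    linear_combination (norm := ring_nf) h₁ + 2 * X * ih1 - ih2 - U R (m + 1) * h₂ + U R m * h₃

variable {R}

theorem eval_U_add_one (n : ℤ) (x : R) :
    (U R (n + 1)).eval x = 2 * x * (U R n).eval x - (U R (n - 1)).eval x := by
  simp [U_add_one]

open Real in
theorem eval_U_real_pos {n : ℤ} (hn : 0 ≤ n) {x : ℝ} (hx : 1 < x) : 0 < (U ℝ n).eval x := by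
  have hθ : 0 < arcosh x := arcosh_pos hx
  have h := U_real_cosh (arcosh x) n
  rw [cosh_arcosh hx.le] at h
  refine pos_of_mul_pos_left (h ▸ sinh_pos_iff.mpr ?_) (sinh_pos_iff.mpr hθ).le
  exact mul_pos (by exact_mod_cast Int.lt_add_one_of_le hn) hθ

end Polynomial.Chebyshev

open Polynomial.Chebyshev

section Green

variable {R : Type*} [CommRing R] (n : ℤ) (x : R)

/-- `U_n(x)` times the Green's function of `-Δ + 2x - 2` on `{0, …, n - 1}` with Dirichlet
conditions at `-1` and `n`. -/
noncomputable def chebyshevGreen (a b : ℤ) : R :=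
  (U R (min a b)).eval x * (U R (n - 1 - max a b)).eval x

variable {n x}

theorem chebyshevGreen_of_le {a b : ℤ} (h : a ≤ b) :
    chebyshevGreen n x a b = (U R a).eval x * (U R (n - 1 - b)).eval x := by
  rw [chebyshevGreen, min_eq_left h, max_eq_right h]

theorem chebyshevGreen_of_ge {a b : ℤ} (h : b ≤ a) :
    chebyshevGreen n x a b = (U R b).eval x * (U R (n - 1 - a)).eval x := by
  rw [chebyshevGreen, min_eq_right h, max_eq_left h]

theorem chebyshevGreen_neg_one_left {b : ℤ} (hb : -1 ≤ b) : chebyshevGreen n x (-1) b = 0 := by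
  simp [chebyshevGreen_of_le hb, U_neg_one]

theorem chebyshevGreen_length_left {b : ℤ} (hb : b ≤ n) : chebyshevGreen n x n b = 0 := by
  simp [chebyshevGreen_of_ge hb, U_neg_one]

theorem two_mul_chebyshevGreen_sub_sub (a b : ℤ) :
    2 * x * chebyshevGreen n x a b - chebyshevGreen n x (a - 1) b - chebyshevGreen n x (a + 1) b =
      if a = b then (U R n).eval x else 0 := by
  rcases lt_trichotomy a b with hab | rfl | hab
  · rw [chebyshevGreen_of_le hab.le, chebyshevGreen_of_le (by omega),
      chebyshevGreen_of_le (by omega), if_neg hab.ne, eval_U_add_one]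
    ring
  · rw [chebyshevGreen_of_le le_rfl, chebyshevGreen_of_le (by omega),
      chebyshevGreen_of_ge (by omega), if_pos rfl]
    have h := congrArg (eval x) (U_add_add_one R a (n - 1 - a))
    rw [show a + (n - 1 - a) + 1 = n by ring] at h
    rw [h, eval_sub, eval_mul, eval_mul, eval_U_add_one,
      show n - 1 - (a + 1) = n - 1 - a - 1 by ring]
    ring
  · rw [chebyshevGreen_of_ge hab.le, chebyshevGreen_of_ge (by omega),
      chebyshevGreen_of_ge (by omega), if_neg hab.ne', show n - 1 - (a - 1) = n - 1 - a + 1 by ring,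
      show n - 1 - (a + 1) = n - 1 - a - 1 by ring, eval_U_add_one]
    ring

end Green

theorem Fin.sum_ite_intCast_eq {M : Type*} [AddCommMonoid M] (ℓ : ℕ) (c : ℤ) (f : ℤ → M) :
    ∑ k : Fin ℓ, (if (k : ℤ) = c then f k else 0) = if 0 ≤ c ∧ c < ℓ then f c else 0 := by
  split_ifs with hc
  · lift c to ℕ using hc.1
    have hcℓ : c < ℓ := by exact_mod_cast hc.2
    simp_rw [Nat.cast_inj]
    rw [Fin.sum_univ_eq_sum_range (fun k => if k = c then f k else 0), Finset.sum_ite_eq',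
      if_pos (Finset.mem_range.mpr hcℓ)]
  · refine Finset.sum_eq_zero fun k _ => if_neg ?_
    have := k.isLt
    omega

section Tridiagonal

variable {R : Type*} [CommRing R] {ℓ : ℕ} {s : R} {D : Matrix (Fin ℓ) (Fin ℓ) R}

theorem sum_tridiagonal_mul
    (hD : ∀ i j : Fin ℓ,
      D i j = if (i : ℤ) = j then s else if |(i : ℤ) - j| = 1 then -1 else 0)
    (v : ℤ → R) (hv₀ : v (-1) = 0) (hvℓ : v ℓ = 0) (i : Fin ℓ) :
    ∑ k, D i k * v k = s * v i - v (i - 1) - v (i + 1) := by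
  have hterm : ∀ k : Fin ℓ, D i k * v k = s * (if (k : ℤ) = i then v k else 0) -
      (if (k : ℤ) = i - 1 then v k else 0) - (if (k : ℤ) = i + 1 then v k else 0) := by
    intro k
    simp only [hD, abs_eq zero_le_one]
    split_ifs <;> first | omega | ring
  simp only [hterm, Finset.sum_sub_distrib, ← Finset.mul_sum, Fin.sum_ite_intCast_eq]
  have hi := i.isLt
  have hprev : (if 0 ≤ (i : ℤ) - 1 ∧ (i : ℤ) - 1 < ℓ then v (i - 1) else 0) = v (i - 1) := by
    split_ifs
    · rfl
    · rw [show (i : ℤ) - 1 = -1 by omega, hv₀]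
  have hnext : (if 0 ≤ (i : ℤ) + 1 ∧ (i : ℤ) + 1 < ℓ then v (i + 1) else 0) = v (i + 1) := by
    split_ifs
    · rfl
    · rw [show (i : ℤ) + 1 = ℓ by omega, hvℓ]
  rw [if_pos (by omega), hprev, hnext]

theorem tridiagonal_mul_chebyshevGreen {x : R}
    (hD : ∀ i j : Fin ℓ,
      D i j = if (i : ℤ) = j then 2 * x else if |(i : ℤ) - j| = 1 then -1 else 0) :
    D * Matrix.of (fun i j : Fin ℓ => chebyshevGreen ℓ x i j) = (U R ℓ).eval x • 1 := by
  ext i j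
  rw [Matrix.mul_apply, Matrix.smul_apply, Matrix.one_apply]
  simp only [Matrix.of_apply]
  rw [sum_tridiagonal_mul hD (chebyshevGreen ℓ x · j) (chebyshevGreen_neg_one_left (by omega))
    (chebyshevGreen_length_left (by omega)), two_mul_chebyshevGreen_sub_sub]
  simp [Fin.ext_iff]

end Tridiagonal

theorem tridiagonal_inverse_chebyshevU_general (s : ℝ) (hs : 2 < s) (ℓ : ℕ)
    (D : Matrix (Fin ℓ) (Fin ℓ) ℝ)
    (hD : ∀ i j : Fin ℓ,
      D i j = if (i : ℤ) = j then s else if |(i : ℤ) - j| = 1 then -1 else 0) :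
    IsUnit D ∧ ∀ i j : Fin ℓ,
      D⁻¹ i j =
        (Polynomial.Chebyshev.U ℝ (min (i : ℤ) (j : ℤ))).eval (s / 2) *
          (Polynomial.Chebyshev.U ℝ ((ℓ : ℤ) - 1 - max (i : ℤ) (j : ℤ))).eval (s / 2) /
          (Polynomial.Chebyshev.U ℝ ℓ).eval (s / 2) := by
  have hU : (U ℝ ℓ).eval (s / 2) ≠ 0 := (eval_U_real_pos (by positivity) (by linarith)).ne'
  have hDG : D * ((U ℝ ℓ).eval (s / 2))⁻¹ •
      Matrix.of (fun i j : Fin ℓ => chebyshevGreen ℓ (s / 2) i j) = 1 := by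
    rw [Matrix.mul_smul, tridiagonal_mul_chebyshevGreen
        (by simpa only [mul_div_cancel₀ s two_ne_zero] using hD),
      smul_smul, inv_mul_cancel₀ hU, one_smul]
  refine ⟨(isUnit_iff_isUnit_det D).mpr (isUnit_det_of_right_inverse hDG), fun i j => ?_⟩
  rw [inv_eq_right_inv hDG, Matrix.smul_apply, of_apply, smul_eq_mul, chebyshevGreen,
    inv_mul_eq_div]

/-- The inverse of the `ℓ×ℓ` tridiagonal Dirichlet matrix `D` (diagonal `s`,
off-diagonal `−1`) is the Dirichlet Green's function
`(D⁻¹)_{ij} = U_{min(i,j)−1}(s/2)·U_{ℓ−max(i,j)}(s/2)/U_ℓ(s/2)`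
(indices `i, j ∈ {1,…,ℓ}`, here represented 0-based by `Fin ℓ`). -/
theorem tridiagonal_inverse_chebyshevU (s : ℝ) (hs : 2 < s) (ℓ : ℕ) (hℓ : 1 ≤ ℓ)
    (D : Matrix (Fin ℓ) (Fin ℓ) ℝ)
    (hD : ∀ i j : Fin ℓ,
      D i j = if (i : ℤ) = j then s else if |(i : ℤ) - j| = 1 then -1 else 0) :
    IsUnit D ∧ ∀ i j : Fin ℓ,
      D⁻¹ i j =
        (Polynomial.Chebyshev.U ℝ (min (i : ℤ) (j : ℤ))).eval (s / 2) *
          (Polynomial.Chebyshev.U ℝ ((ℓ : ℤ) - 1 - max (i : ℤ) (j : ℤ))).eval (s / 2) /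
          (Polynomial.Chebyshev.U ℝ ℓ).eval (s / 2) :=
  tridiagonal_inverse_chebyshevU_general s hs ℓ D hD
end

section
/- Let s > 2, ℓ ≥ 1, and let g be the Dirichlet Green's function g_{ij} = U_{min(i,j)−1}(s/2)·U_{ℓ−max(i,j)}(s/2)/U_ℓ(s/2). If x : {0,…,ℓ+1} → ℝ and m : {1,…,ℓ} → ℝ satisfy −x_{t+1} + s·x_t − x_{t−1} = m_t for all t ∈ {1,…,ℓ}, then x_t = Σ_{t'=1}^{ℓ} g_{tt'}·m_{t'} + g_{t1}·x_0 + g_{tℓ}·x_{ℓ+1} for every t ∈ {1,…,ℓ}. -/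
open Polynomial

/-- Discrete Green's identity for the cat map recurrence: if
`−x_{t+1} + s·x_t − x_{t−1} = m_t` on `{1,…,ℓ}`, then for every `t ∈ {1,…,ℓ}`,
`x_t = Σ_{t'=1}^{ℓ} g_{tt'}·m_{t'} + g_{t1}·x_0 + g_{tℓ}·x_{ℓ+1}`,
where `g` is the Dirichlet Green's function. -/
theorem cat_dirichlet_green_identity (s : ℝ) (hs : 2 < s) (ℓ : ℤ) (hℓ : 1 ≤ ℓ)
    (g : ℤ → ℤ → ℝ)
    (hg : ∀ i j : ℤ, g i j =
      (Polynomial.Chebyshev.U ℝ (min i j - 1)).eval (s / 2) *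
        (Polynomial.Chebyshev.U ℝ (ℓ - max i j)).eval (s / 2) /
        (Polynomial.Chebyshev.U ℝ ℓ).eval (s / 2))
    (x m : ℤ → ℝ)
    (hx : ∀ t ∈ Finset.Icc 1 ℓ, -x (t + 1) + s * x t - x (t - 1) = m t) :
    ∀ t ∈ Finset.Icc 1 ℓ,
      x t = (∑ t' ∈ Finset.Icc 1 ℓ, g t t' * m t') + g t 1 * x 0 + g t ℓ * x (ℓ + 1) := by
  set u : ℤ → ℝ := fun n => (Chebyshev.U ℝ n).eval (s / 2) with hu
  -- Chebyshev recurrence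
  have urec : ∀ n : ℤ, u (n + 2) = s * u (n + 1) - u n := by
    intro n
    have h := congrArg (eval (s / 2)) (Chebyshev.U_add_two ℝ n)
    simp only [eval_sub, eval_mul, eval_ofNat, eval_X] at h
    simp only [hu]
    linear_combination h
  have u0 : u 0 = 1 := by simp [hu, Chebyshev.U_zero]
  have um1 : u (-1) = 0 := by simp [hu, Chebyshev.U_neg_one]
  -- positivity / monotonicity
  have ukey : ∀ k : ℕ, 1 ≤ u k ∧ u ((k : ℤ) - 1) ≤ u k := by
    intro k
    induction k with
    | zero => simpa [u0, um1] using zero_le_one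
    | succ k ih =>
      obtain ⟨h1, h2⟩ := ih
      have hk0 : (0:ℝ) ≤ u k := le_trans zero_le_one h1
      have hr : u ((k : ℤ) + 1) = s * u k - u ((k : ℤ) - 1) := by
        have := urec ((k : ℤ) - 1)
        convert this using 2 <;> ring
      have hge : u k ≤ u ((k : ℤ) + 1) := by
        rw [hr]; nlinarith
      constructor
      · push_cast; linarith
      · push_cast; simpa using hge
  have upos : ∀ n : ℤ, 0 ≤ n → 1 ≤ u n := by
    intro n hn
    obtain ⟨k, rfl⟩ := Int.eq_ofNat_of_zero_le hn
    exact (ukey k).1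
  have uℓpos : 0 < u ℓ := lt_of_lt_of_le one_pos (upos ℓ (by omega))
  have uℓne : u ℓ ≠ 0 := ne_of_gt uℓpos
  -- determinant identity: u k * u (ℓ - k) - u (k-1) * u (ℓ - k - 1) = u ℓ
  have det : ∀ k : ℕ, u k * u (ℓ - k) - u ((k:ℤ) - 1) * u (ℓ - k - 1) = u ℓ := by
    intro k
    induction k with
    | zero => simp [u0, um1]
    | succ k ih =>
      have h1 : u ((k:ℤ) + 1) = s * u k - u ((k:ℤ) - 1) := by
        have := urec ((k : ℤ) - 1); convert this using 2 <;> ring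
      have h2 : u (ℓ - k - 2) = s * u (ℓ - k - 1) - u (ℓ - k) := by
        have := urec (ℓ - (k:ℤ) - 2); rw [show ℓ - (k:ℤ) - 2 + 2 = ℓ - k by ring,
          show ℓ - (k:ℤ) - 2 + 1 = ℓ - k - 1 by ring] at this
        linarith
      push_cast
      rw [show (k:ℤ) + 1 - 1 = (k:ℤ) by ring, show ℓ - ((k:ℤ) + 1) = ℓ - k - 1 by ring, show ℓ - (k:ℤ) - 1 - 1 = ℓ - k - 2 by ring,
        h1, h2]
      linear_combination ih
  have det' : ∀ t : ℤ, 1 ≤ t → u (t - 1) * u (ℓ - t + 1) - u (t - 2) * u (ℓ - t) = u ℓ := by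
    intro t ht
    obtain ⟨k, hk⟩ : ∃ k : ℕ, t - 1 = (k : ℤ) := ⟨(t-1).toNat, by omega⟩
    have := det k
    rw [show (k:ℤ) = t - 1 from hk.symm] at this
    rw [show ℓ - (t-1) - 1 = ℓ - t by ring, show t - 1 - 1 = t - 2 by ring,
      show ℓ - (t-1) = ℓ - t + 1 by ring] at this
    exact this
  -- delta identity for Green's function
  have gdelta : ∀ t ∈ Finset.Icc 1 ℓ, ∀ t' ∈ Finset.Icc 1 ℓ,
      -g (t+1) t' + s * g t t' - g (t-1) t' = if t = t' then 1 else 0 := by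
    intro t ht t' ht'
    simp only [Finset.mem_Icc] at ht ht'
    rw [hg, hg, hg]
    rcases lt_trichotomy t t' with h | h | h
    · rw [if_neg (by omega)]
      rw [min_eq_left (by omega), min_eq_left (by omega), min_eq_left (by omega),
        max_eq_right (by omega), max_eq_right (by omega), max_eq_right (by omega)]
      have hr : u (t + 1 - 1) = s * u (t - 1) - u (t - 1 - 1) := by
        have := urec (t - 2); rw [show t - 2 + 2 = t + 1 - 1 by ring,
          show t - 2 + 1 = t - 1 by ring, show t - 2 = t - 1 - 1 by ring] at this
        exact this
      show -(u (t+1-1) * u (ℓ - t') / u ℓ) + s * (u (t-1) * u (ℓ - t') / u ℓ)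
          - u (t-1-1) * u (ℓ - t') / u ℓ = 0
      linear_combination (-(u (ℓ - t')) / u ℓ) * hr
    · subst h
      rw [if_pos rfl]
      rw [min_eq_right (by omega), max_eq_left (by omega), min_self, max_self,
        min_eq_left (by omega), max_eq_right (by omega)]
      have hr : u (ℓ - t + 1) = s * u (ℓ - t) - u (ℓ - (t+1)) := by
        have := urec (ℓ - t - 1); rw [show ℓ - t - 1 + 2 = ℓ - t + 1 by ring,
          show ℓ - t - 1 + 1 = ℓ - t by ring, show ℓ - t - 1 = ℓ - (t+1) by ring] at this
        exact this
      have hd := det' t (by omega)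
      show -(u (t-1) * u (ℓ - (t+1)) / u ℓ) + s * (u (t-1) * u (ℓ - t) / u ℓ)
          - u (t-1-1) * u (ℓ - t) / u ℓ = 1
      rw [show t - 1 - 1 = t - 2 by ring]
      linear_combination (-(u (t-1)) / u ℓ) * hr + (1 / u ℓ) * hd + div_self uℓne
    · rw [if_neg (by omega)]
      rw [min_eq_right (by omega), min_eq_right (by omega), min_eq_right (by omega),
        max_eq_left (by omega), max_eq_left (by omega), max_eq_left (by omega)]
      have hr : u (ℓ - (t-1)) = s * u (ℓ - t) - u (ℓ - (t+1)) := by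
        have := urec (ℓ - t - 1); rw [show ℓ - t - 1 + 2 = ℓ - (t-1) by ring,
          show ℓ - t - 1 + 1 = ℓ - t by ring, show ℓ - t - 1 = ℓ - (t+1) by ring] at this
        exact this
      show -(u (t'-1) * u (ℓ - (t+1)) / u ℓ) + s * (u (t'-1) * u (ℓ - t) / u ℓ)
          - u (t'-1) * u (ℓ - (t-1)) / u ℓ = 0
      linear_combination (-(u (t'-1)) / u ℓ) * hr
  -- the candidate solution
  set y : ℤ → ℝ := fun t => (∑ t' ∈ Finset.Icc 1 ℓ, g t t' * m t')
      + u (ℓ - t) / u ℓ * x 0 + u (t - 1) / u ℓ * x (ℓ + 1) with hy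
  have hy0 : y 0 = x 0 := by
    rw [hy]
    simp only
    rw [Finset.sum_eq_zero, show (0:ℤ) - 1 = -1 by ring, um1, sub_zero, div_self uℓne]
    · ring
    · intro t' ht'
      simp only [Finset.mem_Icc] at ht'
      rw [hg, min_eq_left (by omega)]
      simp [um1, show (0:ℤ) - 1 = -1 by ring]
  have hyl : y (ℓ + 1) = x (ℓ + 1) := by
    rw [hy]
    simp only
    rw [Finset.sum_eq_zero, show ℓ - (ℓ + 1) = -1 by ring, um1,
      show ℓ + 1 - 1 = ℓ by ring, div_self uℓne]
    · ring
    · intro t' ht'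
      simp only [Finset.mem_Icc] at ht'
      rw [hg, max_eq_left (by omega)]
      simp [um1, show ℓ - (ℓ + 1) = -1 by ring]
  have hyrec : ∀ t ∈ Finset.Icc 1 ℓ, -y (t + 1) + s * y t - y (t - 1) = m t := by
    intro t ht
    have htm : t ∈ Finset.Icc 1 ℓ := ht
    simp only [Finset.mem_Icc] at ht
    rw [hy]
    simp only
    have hb1 : -(u (ℓ - (t+1)) / u ℓ) + s * (u (ℓ - t) / u ℓ) - u (ℓ - (t-1)) / u ℓ = 0 := by
      have := urec (ℓ - t - 1); rw [show ℓ - t - 1 + 2 = ℓ - (t-1) by ring,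
        show ℓ - t - 1 + 1 = ℓ - t by ring, show ℓ - t - 1 = ℓ - (t+1) by ring] at this
      linear_combination (-1 / u ℓ) * this
    have hb2 : -(u (t + 1 - 1) / u ℓ) + s * (u (t-1) / u ℓ) - u (t - 1 - 1) / u ℓ = 0 := by
      have := urec (t - 2); rw [show t - 2 + 2 = t + 1 - 1 by ring,
        show t - 2 + 1 = t - 1 by ring, show t - 2 = t - 1 - 1 by ring] at this
      linear_combination (-1 / u ℓ) * this
    have hsum : -(∑ t' ∈ Finset.Icc 1 ℓ, g (t+1) t' * m t')
        + s * (∑ t' ∈ Finset.Icc 1 ℓ, g t t' * m t')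
        - (∑ t' ∈ Finset.Icc 1 ℓ, g (t-1) t' * m t') = m t := by
      rw [← Finset.sum_neg_distrib, Finset.mul_sum, ← Finset.sum_add_distrib,
        ← Finset.sum_sub_distrib]
      have : ∀ t' ∈ Finset.Icc 1 ℓ,
          -(g (t+1) t' * m t') + s * (g t t' * m t') - g (t-1) t' * m t'
          = (if t = t' then 1 else 0) * m t' := by
        intro t' ht'
        have := gdelta t htm t' ht'
        linear_combination m t' * this
      rw [Finset.sum_congr rfl this]
      simp only [ite_mul, one_mul, zero_mul]
      rw [Finset.sum_ite_eq]
      simp [htm]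
    linear_combination hsum + x 0 * hb1 + x (ℓ + 1) * hb2
  -- uniqueness
  have hDrec : ∀ t ∈ Finset.Icc 1 ℓ,
      x (t + 1) - y (t + 1) = s * (x t - y t) - (x (t - 1) - y (t - 1)) := by
    intro t ht
    linear_combination (hyrec t ht) - (hx t ht)
  set c : ℝ := x 1 - y 1 with hc
  have claim : ∀ k : ℕ, (k : ℤ) ≤ ℓ →
      (x (k : ℤ) - y (k : ℤ) = c * u ((k : ℤ) - 1)) ∧
      (x ((k : ℤ) + 1) - y ((k : ℤ) + 1) = c * u (k : ℤ)) := by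
    intro k
    induction k with
    | zero =>
      intro _
      constructor
      · push_cast
        simp [um1, hy0]
      · push_cast
        simp [u0, hc]
    | succ k ih =>
      intro hk
      push_cast at hk ⊢
      have hk' : (k : ℤ) ≤ ℓ := by omega
      obtain ⟨ih1, ih2⟩ := ih hk'
      refine ⟨by simpa using ih2, ?_⟩
      have hmem : (k : ℤ) + 1 ∈ Finset.Icc 1 ℓ := by
        simp only [Finset.mem_Icc]; omega
      have hstep := hDrec ((k : ℤ) + 1) hmem
      rw [show (k : ℤ) + 1 - 1 = (k : ℤ) by ring] at hstep
      have hrr : u ((k : ℤ) + 1) = s * u (k : ℤ) - u ((k : ℤ) - 1) := by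
        have := urec ((k : ℤ) - 1)
        rw [show (k : ℤ) - 1 + 2 = (k : ℤ) + 1 by ring,
          show (k : ℤ) - 1 + 1 = (k : ℤ) by ring] at this
        exact this
      rw [hstep, ih1, ih2, hrr]
      ring
  have hc0 : c = 0 := by
    obtain ⟨k, hk⟩ : ∃ k : ℕ, (k : ℤ) = ℓ := ⟨ℓ.toNat, by omega⟩
    have := (claim k (by omega)).2
    rw [hk, hyl] at this
    have : c * u ℓ = 0 := by linarith
    exact (mul_eq_zero.mp this).resolve_right uℓne
  intro t ht
  have htt : 1 ≤ t ∧ t ≤ ℓ := by simpa [Finset.mem_Icc] using ht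
  obtain ⟨k, hk⟩ : ∃ k : ℕ, (k : ℤ) = t := ⟨t.toNat, by omega⟩
  have hxy : x t = y t := by
    have := (claim k (by omega)).1
    rw [hk, hc0] at this
    linarith [this]
  have hg1 : g t 1 = u (ℓ - t) / u ℓ := by
    rw [hg, min_eq_right (by omega : (1:ℤ) ≤ t), max_eq_left (by omega : (1:ℤ) ≤ t)]
    show u (1 - 1) * u (ℓ - t) / u ℓ = _
    rw [show (1:ℤ) - 1 = 0 by ring, u0, one_mul]
  have hg2 : g t ℓ = u (t - 1) / u ℓ := by
    rw [hg, min_eq_left (by omega : t ≤ ℓ), max_eq_right (by omega : t ≤ ℓ)]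
    show u (t - 1) * u (ℓ - ℓ) / u ℓ = _
    rw [show ℓ - ℓ = 0 by ring, u0, mul_one]
  rw [hxy, hy, hg1, hg2]
end

section
/- Let s > 2, cosh λ = s/2, and let x : {0,…,ℓ+1} → [0,1) satisfy the cat map recurrence −x_{t+1} + s·x_t − x_{t−1} = m_t on {1,…,ℓ}. Define the approximate state x̄_i = Σ_{j=1}^{ℓ} g_{ij} m_j with g the Dirichlet Green's function. Then for all i ∈ {1,…,ℓ}: |x_i − x̄_i| ≤ cosh((½(ℓ+1) − i)λ)/cosh(½(ℓ+1)λ). -/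
/-!
By the Chebyshev recurrence, `i ↦ U_{i-1}(s/2)` and `i ↦ U_{ℓ-i}(s/2)` solve the homogeneous
recurrence `-y_{i+1} + s y_i - y_{i-1} = 0`, so `g(·, j)` solves it away from `i = j`; on the
diagonal the addition formula `U_{m+k} = U_m U_k - U_{m-1} U_{k-1}` gives the jump `1`. Hence
`x - x̄` solves the homogeneous recurrence on `{1,…,ℓ}` with boundary values `x_0, x_{ℓ+1}`, and
since `s > 2` the maximum principle makes it equal to `(U_{ℓ-i} x_0 + U_{i-1} x_{ℓ+1}) / U_ℓ`.
With `U_n(cosh λ) = sinh((n+1)λ) / sinh λ` and `x_0, x_{ℓ+1} < 1`, this is at most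
`(sinh((ℓ+1-i)λ) + sinh(iλ)) / sinh((ℓ+1)λ)`, which is the claimed ratio of `cosh`s after
factoring `2 sinh(½(ℓ+1)λ)` out of numerator and denominator.
-/

open Polynomial Real Finset

namespace Polynomial.Chebyshev

variable (R : Type*) [CommRing R]

theorem U_add (m k : ℤ) : U R (m + k) = U R m * U R k - U R (m - 1) * U R (k - 1) := by
  induction k using Polynomial.Chebyshev.induct with
  | zero => simp [U_neg_one]
  | one => simp [U_add_one R m]; ring
  | add_two k ih1 ih2 =>
    linear_combination (norm := ring_nf) U_add_two R (m + k) + 2 * X * ih1 - ih2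
      - U R m * U_add_two R k + U R (m - 1) * U_add_one R k
  | neg_add_one k ih1 ih2 =>
    linear_combination (norm := ring_nf) U_sub_one R (m - k) + 2 * X * ih1 - ih2
      - U R m * U_sub_one R (-k) + U R (m - 1) * U_sub_one R (-k - 1)

theorem U_real_cosh_pos {θ : ℝ} (hθ : 0 < θ) {n : ℤ} (hn : 0 ≤ n) :
    0 < (U ℝ n).eval (cosh θ) := by
  have hn' : (0 : ℝ) ≤ n := by exact_mod_cast hn
  have : 0 < (U ℝ n).eval (cosh θ) * sinh θ := by
    rw [U_real_cosh]
    exact sinh_pos_iff.2 (by positivity)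
  exact pos_of_mul_pos_left this (sinh_pos_iff.2 hθ).le

theorem U_real_cosh_sub_add_U_real_cosh_sub_one_div {θ : ℝ} (hθ : θ ≠ 0) {ℓ : ℤ} (hℓ : ℓ ≠ -1)
    (i : ℤ) :
    ((U ℝ (ℓ - i)).eval (cosh θ) + (U ℝ (i - 1)).eval (cosh θ)) / (U ℝ ℓ).eval (cosh θ) =
      cosh (((ℓ + 1) / 2 - i) * θ) / cosh ((ℓ + 1) / 2 * θ) := by
  have hsinh : sinh θ ≠ 0 := sinh_ne_zero.2 hθ
  have hA : sinh ((ℓ + 1) / 2 * θ) ≠ 0 := by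
    have : (ℓ : ℝ) + 1 ≠ 0 := by exact_mod_cast (show ℓ + 1 ≠ 0 by omega)
    exact sinh_ne_zero.2 (by positivity)
  have hU (n : ℤ) : (U ℝ n).eval (cosh θ) = sinh ((n + 1) * θ) / sinh θ :=
    eq_div_of_mul_eq hsinh (U_real_cosh θ n)
  simp only [hU]
  set A := (ℓ + 1) / 2 * θ
  set B := ((ℓ + 1) / 2 - i) * θ
  push_cast
  rw [show (ℓ - i + 1) * θ = A + B by ring, show (i - 1 + 1) * θ = A - B by ring,
    show (ℓ + 1) * θ = 2 * A by ring, sinh_add, sinh_sub, sinh_two_mul]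
  field_simp
  ring

end Polynomial.Chebyshev

open Polynomial.Chebyshev

def catOperator (s : ℝ) : (ℤ → ℝ) →ₗ[ℝ] ℤ → ℝ where
  toFun y t := -y (t + 1) + s * y t - y (t - 1)
  map_add' y z := by ext t; simp only [Pi.add_apply]; ring
  map_smul' c y := by ext t; simp only [Pi.smul_apply, smul_eq_mul, RingHom.id_apply]; ring

@[simp]
lemma catOperator_apply (s : ℝ) (y : ℤ → ℝ) (t : ℤ) :
    catOperator s y t = -y (t + 1) + s * y t - y (t - 1) := rfl

section

variable {s : ℝ}

lemma catOperator_U_eval_sub_one (t : ℤ) :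
    catOperator s (fun n => (U ℝ (n - 1)).eval (s / 2)) t = 0 := by
  simp only [catOperator_apply, add_sub_cancel_right, U_sub_one ℝ (t - 1), sub_add_cancel,
    eval_sub, eval_mul, eval_ofNat, eval_X]
  ring

lemma catOperator_U_eval_sub (k t : ℤ) :
    catOperator s (fun n => (U ℝ (k - n)).eval (s / 2)) t = 0 := by
  rw [catOperator_apply, show k - (t + 1) = k - t - 1 by ring,
    show k - (t - 1) = k - t + 1 by ring, U_sub_one]
  simp only [eval_sub, eval_mul, eval_ofNat, eval_X]
  ring

lemma catOperator_apply_congr {y z : ℤ → ℝ} {t : ℤ}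
    (h : ∀ n, t - 1 ≤ n → n ≤ t + 1 → y n = z n) : catOperator s y t = catOperator s z t := by
  simp only [catOperator_apply, h (t + 1) (by omega) le_rfl, h t (by omega) (by omega),
    h (t - 1) le_rfl (by omega)]

noncomputable def dirichletGreen (s : ℝ) (ℓ i j : ℤ) : ℝ :=
  (U ℝ (min i j - 1)).eval (s / 2) * (U ℝ (ℓ - max i j)).eval (s / 2) / (U ℝ ℓ).eval (s / 2)

lemma dirichletGreen_zero_left {ℓ j : ℤ} (hj : 0 ≤ j) : dirichletGreen s ℓ 0 j = 0 := by
  simp [dirichletGreen, min_eq_left hj, U_neg_one]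

lemma dirichletGreen_add_one_left {ℓ j : ℤ} (hj : j ≤ ℓ + 1) :
    dirichletGreen s ℓ (ℓ + 1) j = 0 := by
  simp [dirichletGreen, max_eq_left hj, U_neg_one]

lemma catOperator_dirichletGreen {ℓ : ℤ} (hU : (U ℝ ℓ).eval (s / 2) ≠ 0) (i j : ℤ) :
    catOperator s (dirichletGreen s ℓ · j) i = if i = j then 1 else 0 := by
  rcases lt_trichotomy i j with hij | rfl | hji
  · rw [if_neg hij.ne, catOperator_apply_congr (z := ((U ℝ (ℓ - j)).eval (s / 2) /
      (U ℝ ℓ).eval (s / 2)) • fun n => (U ℝ (n - 1)).eval (s / 2)), map_smul, Pi.smul_apply,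
      catOperator_U_eval_sub_one, smul_zero]
    intro n _ hn
    simp only [dirichletGreen, min_eq_left (by omega : n ≤ j), max_eq_right (by omega : n ≤ j),
      Pi.smul_apply, smul_eq_mul]
    ring
  · rw [if_pos rfl, catOperator_apply]
    simp only [dirichletGreen, min_self, max_self, min_eq_right (by omega : i ≤ i + 1),
      max_eq_left (by omega : i ≤ i + 1), min_eq_left (by omega : i - 1 ≤ i),
      max_eq_right (by omega : i - 1 ≤ i)]
    have hadd := congrArg (eval (s / 2)) (U_add ℝ i (ℓ - i))
    have hrec := congrArg (eval (s / 2)) (U_sub_one ℝ (i - 1))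
    simp only [add_sub_cancel, eval_sub, eval_mul, eval_ofNat, eval_X, sub_add_cancel] at hadd hrec
    field_simp
    linear_combination (norm := ring_nf) -hadd - (U ℝ (ℓ - i)).eval (s / 2) * hrec
  · rw [if_neg hji.ne', catOperator_apply_congr (z := ((U ℝ (j - 1)).eval (s / 2) /
      (U ℝ ℓ).eval (s / 2)) • fun n => (U ℝ (ℓ - n)).eval (s / 2)), map_smul, Pi.smul_apply,
      catOperator_U_eval_sub, smul_zero]
    intro n hn _
    simp only [dirichletGreen, min_eq_right (by omega : j ≤ n), max_eq_left (by omega : j ≤ n),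
      Pi.smul_apply, smul_eq_mul]
    ring

lemma catOperator_sum_dirichletGreen_mul {ℓ : ℤ} (hU : (U ℝ ℓ).eval (s / 2) ≠ 0) (m : ℤ → ℝ)
    {S : Finset ℤ} {t : ℤ} (ht : t ∈ S) :
    catOperator s (fun i => ∑ j ∈ S, dirichletGreen s ℓ i j * m j) t = m t := by
  have : (fun i => ∑ j ∈ S, dirichletGreen s ℓ i j * m j) =
      ∑ j ∈ S, m j • (dirichletGreen s ℓ · j) := by
    ext i
    simp [Finset.sum_apply, mul_comm]
  rw [this, map_sum]
  simp [Finset.sum_apply, catOperator_dirichletGreen hU, ht]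

noncomputable def dirichletInterpolant (s : ℝ) (ℓ : ℤ) (a b : ℝ) (t : ℤ) : ℝ :=
  ((U ℝ (ℓ - t)).eval (s / 2) * a + (U ℝ (t - 1)).eval (s / 2) * b) / (U ℝ ℓ).eval (s / 2)

lemma catOperator_dirichletInterpolant (ℓ : ℤ) (a b : ℝ) :
    catOperator s (dirichletInterpolant s ℓ a b) = 0 := by
  have : dirichletInterpolant s ℓ a b =
      (a / (U ℝ ℓ).eval (s / 2)) • (fun n => (U ℝ (ℓ - n)).eval (s / 2)) +
        (b / (U ℝ ℓ).eval (s / 2)) • (fun n => (U ℝ (n - 1)).eval (s / 2)) := by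
    ext n
    simp only [dirichletInterpolant, Pi.add_apply, Pi.smul_apply, smul_eq_mul]
    ring
  ext t
  rw [this, map_add, map_smul, map_smul, Pi.add_apply, Pi.smul_apply, Pi.smul_apply,
    catOperator_U_eval_sub, catOperator_U_eval_sub_one]
  simp

lemma dirichletInterpolant_zero {ℓ : ℤ} (hU : (U ℝ ℓ).eval (s / 2) ≠ 0) (a b : ℝ) :
    dirichletInterpolant s ℓ a b 0 = a := by
  simp [dirichletInterpolant, U_neg_one, hU]

lemma dirichletInterpolant_add_one {ℓ : ℤ} (hU : (U ℝ ℓ).eval (s / 2) ≠ 0) (a b : ℝ) :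
    dirichletInterpolant s ℓ a b (ℓ + 1) = b := by
  simp [dirichletInterpolant, U_neg_one, hU]

lemma le_zero_of_catOperator_nonpos (hs : 2 < s) {a b : ℤ} {y : ℤ → ℝ} (ha : y a ≤ 0)
    (hb : y b ≤ 0) (h : ∀ t ∈ Ioo a b, catOperator s y t ≤ 0) : ∀ t ∈ Icc a b, y t ≤ 0 := by
  rcases (Icc a b).eq_empty_or_nonempty with hempty | hne
  · simp [hempty]
  obtain ⟨i, hi, hmax⟩ := exists_max_image _ y hne
  by_contra! hpos
  obtain ⟨t, ht, hyt⟩ := hpos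
  have hyi : 0 < y i := hyt.trans_le (hmax t ht)
  rw [mem_Icc] at hi
  have hia : i ≠ a := by rintro rfl; linarith
  have hib : i ≠ b := by rintro rfl; linarith
  have hint : i ∈ Ioo a b := mem_Ioo.2 ⟨by omega, by omega⟩
  have := h i hint
  have h1 := hmax (i + 1) (by rw [mem_Ioo] at hint; rw [mem_Icc]; omega)
  have h2 := hmax (i - 1) (by rw [mem_Ioo] at hint; rw [mem_Icc]; omega)
  simp only [catOperator_apply] at this
  nlinarith

lemma eq_zero_of_catOperator_eq_zero (hs : 2 < s) {a b : ℤ} {y : ℤ → ℝ} (ha : y a = 0)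
    (hb : y b = 0) (h : ∀ t ∈ Ioo a b, catOperator s y t = 0) : ∀ t ∈ Icc a b, y t = 0 := by
  intro t ht
  have hle := le_zero_of_catOperator_nonpos hs ha.le hb.le (fun t ht => (h t ht).le) t ht
  have hge := le_zero_of_catOperator_nonpos (y := -y) hs (by simp [ha]) (by simp [hb])
    (fun t ht => by rw [map_neg, Pi.neg_apply, h t ht, neg_zero]) t ht
  simp only [Pi.neg_apply, neg_nonpos] at hge
  exact le_antisymm hle hge

theorem sub_sum_dirichletGreen_mul_eq (hs : 2 < s) {ℓ : ℤ} (hU : (U ℝ ℓ).eval (s / 2) ≠ 0)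
    {x m : ℤ → ℝ} (hx : ∀ t ∈ Icc 1 ℓ, catOperator s x t = m t) :
    ∀ t ∈ Icc 0 (ℓ + 1), x t - ∑ j ∈ Icc 1 ℓ, dirichletGreen s ℓ t j * m j =
      dirichletInterpolant s ℓ (x 0) (x (ℓ + 1)) t := by
  set F := fun i => ∑ j ∈ Icc 1 ℓ, dirichletGreen s ℓ i j * m j
  have hF0 : F 0 = 0 := sum_eq_zero fun j hj => by
    rw [dirichletGreen_zero_left (by rw [mem_Icc] at hj; omega), zero_mul]
  have hFℓ : F (ℓ + 1) = 0 := sum_eq_zero fun j hj => by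
    rw [dirichletGreen_add_one_left (by rw [mem_Icc] at hj; omega), zero_mul]
  intro t ht
  rw [← sub_eq_zero]
  refine eq_zero_of_catOperator_eq_zero (y := x - F - dirichletInterpolant s ℓ (x 0) (x (ℓ + 1)))
    hs ?_ ?_ (fun t ht => ?_) t ht
  · simp [hF0, dirichletInterpolant_zero hU]
  · simp [hFℓ, dirichletInterpolant_add_one hU]
  · have ht' : t ∈ Icc 1 ℓ := by rw [mem_Ioo] at ht; rw [mem_Icc]; omega
    rw [map_sub, map_sub, catOperator_dirichletInterpolant, Pi.sub_apply, Pi.sub_apply, hx t ht',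
      catOperator_sum_dirichletGreen_mul hU m ht', Pi.zero_apply, sub_self, sub_zero]

end

section

variable {s θ : ℝ}

lemma abs_dirichletInterpolant_le (hθ : 0 < θ) (hcosh : cosh θ = s / 2) {ℓ i : ℤ}
    (hi : i ∈ Icc 1 ℓ) {a b : ℝ} (ha₀ : 0 ≤ a) (ha₁ : a ≤ 1) (hb₀ : 0 ≤ b) (hb₁ : b ≤ 1) :
    |dirichletInterpolant s ℓ a b i| ≤ cosh (((ℓ + 1) / 2 - i) * θ) / cosh ((ℓ + 1) / 2 * θ) := by
  rw [mem_Icc] at hi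
  rw [← U_real_cosh_sub_add_U_real_cosh_sub_one_div hθ.ne' (by omega : ℓ ≠ -1) i,
    dirichletInterpolant, ← hcosh]
  have hp := U_real_cosh_pos hθ (by omega : 0 ≤ ℓ - i)
  have hq := U_real_cosh_pos hθ (by omega : 0 ≤ i - 1)
  have hr := U_real_cosh_pos hθ (by omega : 0 ≤ ℓ)
  rw [abs_of_nonneg (by positivity)]
  gcongr
  · exact mul_le_of_le_one_right hp.le ha₁
  · exact mul_le_of_le_one_right hq.le hb₁

end

/-- A symbol block determines the orbit up to an exponentially small error:
if `x : {0,…,ℓ+1} → [0,1)` satisfies the cat map recurrence on `{1,…,ℓ}` and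
`x̄_i = Σ_{j=1}^{ℓ} g_{ij} m_j` is the approximate state, then
`|x_i − x̄_i| ≤ cosh((½(ℓ+1) − i)λ)/cosh(½(ℓ+1)λ)` for `i ∈ {1,…,ℓ}`,
where `cosh λ = s/2`. -/
theorem cat_block_shadowing_bound (s lam : ℝ) (hs : 2 < s) (hlam : 0 < lam)
    (hcosh : Real.cosh lam = s / 2) (ℓ : ℤ) (hℓ : 1 ≤ ℓ)
    (g : ℤ → ℤ → ℝ)
    (hg : ∀ i j : ℤ, g i j =
      (Polynomial.Chebyshev.U ℝ (min i j - 1)).eval (s / 2) *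
        (Polynomial.Chebyshev.U ℝ (ℓ - max i j)).eval (s / 2) /
        (Polynomial.Chebyshev.U ℝ ℓ).eval (s / 2))
    (x m : ℤ → ℝ)
    (hrange : ∀ t ∈ Finset.Icc 0 (ℓ + 1), 0 ≤ x t ∧ x t < 1)
    (hx : ∀ t ∈ Finset.Icc 1 ℓ, -x (t + 1) + s * x t - x (t - 1) = m t) :
    ∀ i ∈ Finset.Icc 1 ℓ,
      |x i - ∑ j ∈ Finset.Icc 1 ℓ, g i j * m j| ≤
        Real.cosh ((((ℓ : ℝ) + 1) / 2 - (i : ℝ)) * lam) /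
          Real.cosh ((((ℓ : ℝ) + 1) / 2) * lam) := by
  have hU : (U ℝ ℓ).eval (s / 2) ≠ 0 := (hcosh ▸ U_real_cosh_pos hlam (by omega)).ne'
  have hg' : g = dirichletGreen s ℓ := funext₂ hg
  obtain ⟨hx₀, hx₀'⟩ := hrange 0 (by rw [mem_Icc]; omega)
  obtain ⟨hxℓ, hxℓ'⟩ := hrange (ℓ + 1) (by rw [mem_Icc]; omega)
  intro i hi
  rw [hg', sub_sum_dirichletGreen_mul_eq hs hU hx i (by rw [mem_Icc] at hi ⊢; omega)]
  exact abs_dirichletInterpolant_le hlam hcosh hi hx₀ hx₀'.le hxℓ hxℓ'.le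
end

section
/- Let s > 2 be an integer. The volume of the polytope {(x₁,x₂,x₃,x₄) ∈ [0,1)⁴ : x₁+x₂+x₃+x₄ ≥ 3} equals 1/4!, the volume of {x ∈ [0,1)⁴ : x₁+x₂+x₃+x₄ ≥ 2} equals 1/2, and the volume of {x ∈ [0,1)⁴ : x₁+x₂+x₃+x₄ ≥ 1} equals 23/4!. Consequently the single-site measures of the spatiotemporal cat satisfy μ(−3) = 1/(48s), μ(−2) = 1/(4s), μ(−1) = 1/(2s) − 1/(48s), μ(m) = 1/(2s) for m ∈ {0,…,2s−4}, and these measures together with their conjugates sum to 1. -/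
/-!
The corner simplex `{x ≥ 0, ∑ xᵢ ≤ t}` of `ℝⁿ` has volume `tⁿ/n!`: slicing off the first
coordinate leaves the corner simplex of level `t - a` in `ℝⁿ⁻¹`, and `∫₀ᵗ (t - a)ⁿ⁻¹/(n-1)! da = tⁿ/n!`.
Inside the unit cube, `{∑ xᵢ ≤ 1}` is this simplex for `t = 1`. The reflection `x ↦ 1 - x` carries
`{c ≤ ∑ xᵢ}` onto `{∑ xᵢ ≤ n - c}`, and since the hyperplane `{∑ xᵢ = c}` is null, `{c ≤ ∑ xᵢ}`
and `{∑ xᵢ ≤ c}` split the cube. With `n = 4` this gives `1/24` for `{3 ≤ ∑ xᵢ}`, `1/2` for the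
self-reflected `{2 ≤ ∑ xᵢ}` and `1 - 1/24` for `{1 ≤ ∑ xᵢ}`; the half-open cube differs from the
closed one by a null set.
-/

open MeasureTheory Set

theorem addHaar_setOf_linearMap_eq {E : Type*} [NormedAddCommGroup E] [NormedSpace ℝ E]
    [MeasurableSpace E] [BorelSpace E] [FiniteDimensional ℝ E] (μ : Measure E) [μ.IsAddHaarMeasure]
    {L : E →ₗ[ℝ] ℝ} (hL : L ≠ 0) (c : ℝ) : μ {x | L x = c} = 0 := by
  obtain ⟨v, hv⟩ : ∃ v, L v ≠ 0 := by
    by_contra! h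
    exact hL (LinearMap.ext h)
  set x₀ := (c / L v) • v
  have hx₀ : L x₀ = c := by simp [x₀, hv]
  have hset : {x | L x = c} = (· + -x₀) ⁻¹' (LinearMap.ker L : Set E) := by
    ext x
    simp [hx₀, sub_eq_zero, ← sub_eq_add_neg]
  rw [hset, measure_preimage_add_right]
  exact Measure.addHaar_submodule μ _ (LinearMap.ker_eq_top.not.2 hL)

def cornerSimplex (ι : Type*) [Fintype ι] (t : ℝ) : Set (ι → ℝ) :=
  {x | 0 ≤ x ∧ ∑ i, x i ≤ t}

section UnitCube

variable {ι : Type*} [Fintype ι]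

theorem measurable_sum_apply : Measurable fun x : ι → ℝ => ∑ i, x i :=
  Finset.univ.measurable_sum fun i _ => measurable_pi_apply i

theorem volume_setOf_sum_eq [Nonempty ι] (c : ℝ) : volume {x : ι → ℝ | ∑ i, x i = c} = 0 := by
  have hL : (∑ i, LinearMap.proj i : (ι → ℝ) →ₗ[ℝ] ℝ) ≠ 0 := by
    intro h
    have := LinearMap.congr_fun h 1
    simp at this
  simpa using addHaar_setOf_linearMap_eq volume hL c

theorem measurableSet_cornerSimplex (t : ℝ) : MeasurableSet (cornerSimplex ι t) :=
  measurableSet_Ici.inter (measurableSet_le measurable_sum_apply measurable_const)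

theorem cornerSimplex_eq_empty {t : ℝ} (ht : t < 0) : cornerSimplex ι t = ∅ :=
  eq_empty_of_forall_notMem fun _ ⟨hx, hsum⟩ =>
    (Finset.sum_nonneg fun i _ => hx i).not_gt (hsum.trans_lt ht)

theorem Icc_inter_setOf_sum_le_eq_cornerSimplex {t : ℝ} (ht : t ≤ 1) :
    Icc (0 : ι → ℝ) 1 ∩ {x | ∑ i, x i ≤ t} = cornerSimplex ι t := by
  ext x
  refine ⟨fun ⟨⟨h0, _⟩, hsum⟩ => ⟨h0, hsum⟩, fun ⟨h0, hsum⟩ => ⟨⟨h0, fun i => ?_⟩, hsum⟩⟩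
  calc x i ≤ ∑ j, x j := Finset.single_le_sum (fun j _ => h0 j) (Finset.mem_univ i)
    _ ≤ 1 := hsum.trans ht

theorem volume_unitCube : volume (Icc (0 : ι → ℝ) 1) = 1 := by
  simp [Real.volume_Icc_pi]

theorem volume_Icc_inter_le_sum_add_volume_Icc_inter_sum_le [Nonempty ι] (c : ℝ) :
    volume (Icc (0 : ι → ℝ) 1 ∩ {x | c ≤ ∑ i, x i}) +
      volume (Icc (0 : ι → ℝ) 1 ∩ {x | ∑ i, x i ≤ c}) = 1 := by
  have hmeas : MeasurableSet (Icc (0 : ι → ℝ) 1 ∩ {x | ∑ i, x i ≤ c}) :=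
    measurableSet_Icc.inter (measurableSet_le measurable_sum_apply measurable_const)
  have hnull : volume ((Icc (0 : ι → ℝ) 1 ∩ {x | c ≤ ∑ i, x i}) ∩
      (Icc 0 1 ∩ {x | ∑ i, x i ≤ c})) = 0 :=
    measure_mono_null (fun x hx => le_antisymm hx.2.2 hx.1.2) (volume_setOf_sum_eq c)
  rw [← measure_union_add_inter _ hmeas, hnull, add_zero, ← inter_union_distrib_left,
    inter_eq_left.2 fun x _ => le_total c (∑ i, x i), volume_unitCube]

theorem volume_Icc_inter_le_sum_eq_volume_Icc_inter_sum_le (c : ℝ) :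
    volume (Icc (0 : ι → ℝ) 1 ∩ {x | c ≤ ∑ i, x i}) =
      volume (Icc (0 : ι → ℝ) 1 ∩ {x | ∑ i, x i ≤ Fintype.card ι - c}) := by
  have hpre : (fun x => 1 - x) ⁻¹' (Icc (0 : ι → ℝ) 1 ∩ {x | ∑ i, x i ≤ Fintype.card ι - c}) =
      Icc 0 1 ∩ {x | c ≤ ∑ i, x i} := by
    ext x
    simp only [mem_preimage, mem_inter_iff, mem_Icc, sub_nonneg, sub_le_self_iff, mem_ofPred_eq,
      Pi.sub_apply, Pi.one_apply, Finset.sum_sub_distrib, Finset.sum_const, Finset.card_univ,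
      nsmul_eq_mul, mul_one]
    constructor <;> rintro ⟨⟨h0, h1⟩, hsum⟩ <;> exact ⟨⟨h1, h0⟩, by linarith⟩
  rw [← hpre, (Measure.measurePreserving_sub_left volume 1).measure_preimage
    (measurableSet_Icc.inter (measurableSet_le measurable_sum_apply measurable_const)).nullMeasurableSet]

theorem volume_Icc_inter_half_card_le_sum [Nonempty ι] :
    volume (Icc (0 : ι → ℝ) 1 ∩ {x | (Fintype.card ι : ℝ) / 2 ≤ ∑ i, x i}) =
      ENNReal.ofReal (1 / 2) := by
  have h := volume_Icc_inter_le_sum_add_volume_Icc_inter_sum_le (ι := ι) (Fintype.card ι / 2)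
  have hrefl := volume_Icc_inter_le_sum_eq_volume_Icc_inter_sum_le (ι := ι) (Fintype.card ι / 2)
  rw [sub_half] at hrefl
  rw [← hrefl, ← two_mul] at h
  rw [ENNReal.ofReal_div_of_pos two_pos, ENNReal.ofReal_one, ENNReal.ofReal_ofNat]
  exact (ENNReal.eq_div_iff two_ne_zero ENNReal.ofNat_ne_top).2 h

theorem volume_Ico_cube_inter_le_sum (c : ℝ) :
    volume {x : ι → ℝ | (∀ i, x i ∈ Ico 0 1) ∧ c ≤ ∑ i, x i} =
      volume (Icc (0 : ι → ℝ) 1 ∩ {x | c ≤ ∑ i, x i}) := by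
  have : {x : ι → ℝ | (∀ i, x i ∈ Ico 0 1) ∧ c ≤ ∑ i, x i} =
      univ.pi (fun _ => Ico 0 1) ∩ {x | c ≤ ∑ i, x i} := by
    ext; simp
  rw [this]
  exact measure_congr (Measure.univ_pi_Ico_ae_eq_Icc.inter (ae_eq_refl _))

end UnitCube

section StandardSimplex

theorem cons_mem_cornerSimplex_iff {n : ℕ} {a t : ℝ} {y : Fin n → ℝ} :
    Fin.cons a y ∈ cornerSimplex (Fin (n + 1)) t ↔ 0 ≤ a ∧ y ∈ cornerSimplex (Fin n) (t - a) := by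
  simp only [cornerSimplex, mem_ofPred_eq, Fin.sum_cons, Pi.le_def, Fin.forall_fin_succ,
    Fin.cons_zero, Fin.cons_succ, Pi.zero_apply, le_sub_iff_add_le', and_assoc]

theorem integral_sub_pow_div_factorial (n : ℕ) (t : ℝ) :
    ∫ a in (0 : ℝ)..t, (t - a) ^ n / n.factorial = t ^ (n + 1) / (n + 1).factorial := by
  rw [intervalIntegral.integral_comp_sub_left (fun a => a ^ n / n.factorial), sub_self, sub_zero,
    intervalIntegral.integral_div, integral_pow, zero_pow n.succ_ne_zero, sub_zero,
    Nat.factorial_succ]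
  push_cast
  field_simp

theorem volume_cornerSimplex (n : ℕ) {t : ℝ} (ht : 0 ≤ t) :
    volume (cornerSimplex (Fin n) t) = ENNReal.ofReal (t ^ n / n.factorial) := by
  induction n generalizing t with
  | zero =>
    have : cornerSimplex (Fin 0) t = univ := by
      ext x
      simp [cornerSimplex, ht, Subsingleton.elim x 0]
    simp [this, volume_pi]
  | succ n ih =>
    set e := MeasurableEquiv.piFinSuccAbove (fun _ : Fin (n + 1) => ℝ) 0
    have hslice : ∀ a, volume (Prod.mk a ⁻¹' (e.symm ⁻¹' cornerSimplex (Fin (n + 1)) t)) =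
        (Icc 0 t).indicator (fun a => ENNReal.ofReal ((t - a) ^ n / n.factorial)) a := by
      intro a
      have hpre : Prod.mk a ⁻¹' (e.symm ⁻¹' cornerSimplex (Fin (n + 1)) t) =
          {y | Fin.cons a y ∈ cornerSimplex (Fin (n + 1)) t} := by
        ext y
        simp only [e, mem_preimage, MeasurableEquiv.piFinSuccAbove_symm_apply,
          Fin.insertNthEquiv_zero]
        rfl
      simp only [hpre, cons_mem_cornerSimplex_iff]
      by_cases ha : a ∈ Icc 0 t
      · simp [ha.1, indicator_of_mem ha, ih (sub_nonneg.2 ha.2)]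
      · rw [indicator_of_notMem ha]
        by_cases ha0 : 0 ≤ a
        · simp [ha0, cornerSimplex_eq_empty (sub_neg.2 (not_le.1 fun h => ha ⟨ha0, h⟩))]
        · simp [ha0]
    have he : MeasurePreserving e.symm volume volume :=
      (volume_preserving_piFinSuccAbove (fun _ : Fin (n + 1) => ℝ) 0).symm
    rw [← he.measure_preimage_equiv, Measure.volume_eq_prod, Measure.prod_apply
        (measurableSet_cornerSimplex t |>.preimage (MeasurableEquiv.measurable _))]
    simp only [hslice]
    rw [lintegral_indicator measurableSet_Icc, ← ofReal_integral_eq_lintegral_ofReal,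
      integral_Icc_eq_integral_Ioc, ← intervalIntegral.integral_of_le ht,
      integral_sub_pow_div_factorial]
    · exact (by fun_prop : Continuous fun a : ℝ => (t - a) ^ n / n.factorial).integrableOn_Icc
    · exact ae_restrict_of_forall_mem measurableSet_Icc fun a ha =>
        div_nonneg (pow_nonneg (sub_nonneg.2 ha.2) n) n.factorial.cast_nonneg

theorem volume_Icc_inter_sum_le_one (n : ℕ) :
    volume (Icc (0 : Fin n → ℝ) 1 ∩ {x | ∑ i, x i ≤ 1}) = ENNReal.ofReal (1 / n.factorial) := by
  rw [Icc_inter_setOf_sum_le_eq_cornerSimplex le_rfl, volume_cornerSimplex n zero_le_one, one_pow]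

theorem volume_Icc_inter_sub_one_le_sum (n : ℕ) :
    volume (Icc (0 : Fin n → ℝ) 1 ∩ {x | (n : ℝ) - 1 ≤ ∑ i, x i}) =
      ENNReal.ofReal (1 / n.factorial) := by
  rw [volume_Icc_inter_le_sum_eq_volume_Icc_inter_sum_le, Fintype.card_fin, sub_sub_cancel,
    volume_Icc_inter_sum_le_one]

theorem volume_Icc_inter_one_le_sum (n : ℕ) [NeZero n] :
    volume (Icc (0 : Fin n → ℝ) 1 ∩ {x | 1 ≤ ∑ i, x i}) =
      ENNReal.ofReal (1 - 1 / n.factorial) := by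
  have h := volume_Icc_inter_le_sum_add_volume_Icc_inter_sum_le (ι := Fin n) 1
  rw [volume_Icc_inter_sum_le_one] at h
  rw [ENNReal.eq_sub_of_add_eq ENNReal.ofReal_ne_top h, ← ENNReal.ofReal_one,
    ENNReal.ofReal_sub _ (by positivity)]

end StandardSimplex

/-- Single-site measures of the spatiotemporal cat on a `[1×1]` domain: the
hypercube-corner volumes are `1/4!`, `1/2`, `23/4!`, the resulting measures are
`μ(−3) = 1/(48s)`, `μ(−2) = 1/(4s)`, `μ(−1) = 1/(2s) − 1/(48s)`, `μ(m) = 1/(2s)`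
for the `2s−3` interior symbols `m ∈ {0,…,2s−4}`, and these together with their
conjugates `μ(2s−3), μ(2s−2), μ(2s−1)` sum to 1. -/
theorem spatiotemporal_single_site_measures (s : ℤ) (hs : 3 ≤ s) :
    volume {x : Fin 4 → ℝ | (∀ i, x i ∈ Set.Ico (0 : ℝ) 1) ∧ 3 ≤ ∑ i, x i} =
      ENNReal.ofReal (1 / 24) ∧
    volume {x : Fin 4 → ℝ | (∀ i, x i ∈ Set.Ico (0 : ℝ) 1) ∧ 2 ≤ ∑ i, x i} =
      ENNReal.ofReal (1 / 2) ∧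
    volume {x : Fin 4 → ℝ | (∀ i, x i ∈ Set.Ico (0 : ℝ) 1) ∧ 1 ≤ ∑ i, x i} =
      ENNReal.ofReal (23 / 24) ∧
    (1 / (48 * (s : ℝ)) + 1 / (4 * (s : ℝ)) + (1 / (2 * (s : ℝ)) - 1 / (48 * (s : ℝ)))
        + (2 * (s : ℝ) - 3) * (1 / (2 * (s : ℝ)))
        + (1 / (2 * (s : ℝ)) - 1 / (48 * (s : ℝ))) + 1 / (4 * (s : ℝ))
        + 1 / (48 * (s : ℝ)) = 1) := by
  simp only [volume_Ico_cube_inter_le_sum]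
  refine ⟨?_, ?_, ?_, ?_⟩
  · rw [show (3 : ℝ) = (4 : ℕ) - 1 by norm_num, volume_Icc_inter_sub_one_le_sum]
    norm_num [Nat.factorial]
  · convert volume_Icc_inter_half_card_le_sum (ι := Fin 4) using 5
    norm_num
  · rw [volume_Icc_inter_one_le_sum]
    norm_num [Nat.factorial]
  · have hs₀ : (s : ℝ) ≠ 0 := by positivity
    field_simp
    ring
end
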